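/- (Symbol by block replacement.) Let Σ and I be alphabets, let L be a positive integer, and for each symbol i ∈ I let A_i be a string of length L over Σ. Let a = a₁a₂…aₙ and b = b₁b₂…b_m be nonempty strings over I. Assume α ∈ (0, 1/7), R ≥ 2, and that for all indices i, j with a_i ≠ b_j and for all substrings C and D consisting of consecutive symbols from A_{a_i} and A_{b_j}, respectively, with |C|, |D| ≥ L/R, we have f̄(C,D) ≥ α. Then f̄(A_{a₁}A_{a₂}⋯A_{aₙ}, A_{b₁}A_{b₂}⋯A_{b_m}) > α·f̄(a₁a₂…aₙ, b₁b₂…b_m) − 1/R, where A_{a₁}A_{a₂}⋯A_{aₙ} denotes the concatenation of the blocks A_{a₁},…,A_{aₙ}. -/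

import Mathlib

/-- A match between two strings `a` and `b`: a finite set of pairs of (0-based) indices,
strictly increasing in both coordinates simultaneously, matching equal symbols. -/
def IsMatch {α : Type*} (a b : List α) (M : Finset (ℕ × ℕ)) : Prop :=
  (∀ p ∈ M, p.1 < a.length ∧ p.2 < b.length ∧ a[p.1]? = b[p.2]?) ∧
  (∀ p ∈ M, ∀ q ∈ M, (p.1 < q.1 ↔ p.2 < q.2))

/-- The maximal cardinality of a match between `a` and `b`. -/
noncomputable def maxMatch {α : Type*} (a b : List α) : ℕ :=
  sSup {r : ℕ | ∃ M : Finset (ℕ × ℕ), IsMatch a b M ∧ M.card = r}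

/-- The `f̄` distance between two strings:
`f̄(a,b) = 1 - 2 · max{|M| : M a match between a and b} / (|a| + |b|)`. -/
noncomputable def fbar {α : Type*} (a b : List α) : ℝ :=
  1 - 2 * (maxMatch a b : ℝ) / ((a.length : ℝ) + (b.length : ℝ))

/-!
Fix a maximal match between the block strings and sort its pairs into cells `(i, j)`
according to the blocks `A a_i` and `A b_j` containing them; the occupied cells form a
staircase. In a cell with `a_i ≠ b_j` the pairs lie in windows `C` of `A a_i` and `D` of
`A b_j`; either a window is shorter than `ℓ = L / R` or `f̄(C, D) ≥ α`, and in both cases the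
cell holds at most `(1 - α)(|C| + |D|) / 2 + α ℓ` pairs. The cells with `a_i = b_j` hold at
most `L · maxMatch a b` pairs: a strict chain of such cells is a match between `a` and `b`, and
removing the maximal cells, which lie in one row or one column, removes at most `L` pairs and
shortens every chain. The windows of distinct cells are disjoint and a staircase has at most
`n + m - 1` cells, so summing up and using `α < 1/2` to absorb the `(n + m - 1) α ℓ` error
into `(n + m) L / (2R)` gives the bound.
-/

open Finset Function

section Match

variable {γ : Type*} {a b : List γ} {M N : Finset (ℕ × ℕ)}

lemma IsMatch.fst_injOn (h : IsMatch a b M) : Set.InjOn Prod.fst (M : Set (ℕ × ℕ)) := by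
  intro p hp q hq he
  have := h.2 p hp q hq
  have := h.2 q hq p hp
  exact Prod.ext he (by omega)

lemma IsMatch.snd_injOn (h : IsMatch a b M) : Set.InjOn Prod.snd (M : Set (ℕ × ℕ)) := by
  intro p hp q hq he
  have := h.2 p hp q hq
  have := h.2 q hq p hp
  exact Prod.ext (by omega) he

lemma IsMatch.subset (h : IsMatch a b M) (hN : N ⊆ M) : IsMatch a b N :=
  ⟨fun p hp => h.1 p (hN hp), fun p hp q hq => h.2 p (hN hp) q (hN hq)⟩

lemma IsMatch.card_le_length_left (h : IsMatch a b M) : #M ≤ a.length := by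
  simpa using card_le_card_of_injOn Prod.fst (t := range a.length)
    (fun p hp => mem_range.2 (h.1 p hp).1) h.fst_injOn

lemma IsMatch.card_le_length_right (h : IsMatch a b M) : #M ≤ b.length := by
  simpa using card_le_card_of_injOn Prod.snd (t := range b.length)
    (fun p hp => mem_range.2 (h.1 p hp).2.1) h.snd_injOn

lemma bddAbove_card_isMatch (a b : List γ) :
    BddAbove {r : ℕ | ∃ M : Finset (ℕ × ℕ), IsMatch a b M ∧ #M = r} :=
  ⟨a.length, by rintro r ⟨M, hM, rfl⟩; exact hM.card_le_length_left⟩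

lemma exists_isMatch_card_eq_maxMatch (a b : List γ) :
    ∃ M : Finset (ℕ × ℕ), IsMatch a b M ∧ #M = maxMatch a b :=
  Nat.sSup_mem (s := {r : ℕ | ∃ M : Finset (ℕ × ℕ), IsMatch a b M ∧ #M = r})
    ⟨0, ∅, ⟨by simp, by simp⟩, card_empty⟩ (bddAbove_card_isMatch a b)

lemma IsMatch.card_le_maxMatch (h : IsMatch a b M) : #M ≤ maxMatch a b :=
  le_csSup (bddAbove_card_isMatch a b) ⟨M, h, rfl⟩

lemma maxMatch_le_length_left (a b : List γ) : maxMatch a b ≤ a.length := by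
  obtain ⟨M, hM, hcard⟩ := exists_isMatch_card_eq_maxMatch a b
  exact hcard ▸ hM.card_le_length_left

lemma maxMatch_le_length_right (a b : List γ) : maxMatch a b ≤ b.length := by
  obtain ⟨M, hM, hcard⟩ := exists_isMatch_card_eq_maxMatch a b
  exact hcard ▸ hM.card_le_length_right

lemma IsMatch.card_le_maxMatch_drop_take (h : IsMatch a b M) {i j x y : ℕ}
    (h₁ : ∀ p ∈ M, i ≤ p.1 ∧ p.1 < i + x)
    (h₂ : ∀ p ∈ M, j ≤ p.2 ∧ p.2 < j + y) :
    #M ≤ maxMatch ((a.drop i).take x) ((b.drop j).take y) := by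
  have hinj : Set.InjOn (fun p : ℕ × ℕ => (p.1 - i, p.2 - j)) (M : Set (ℕ × ℕ)) := by
    intro p hp q hq he
    have := h₁ p hp
    have := h₁ q hq
    exact h.fst_injOn hp hq (by simp only [Prod.mk.injEq] at he; omega)
  rw [← card_image_of_injOn hinj]
  refine IsMatch.card_le_maxMatch ⟨?_, ?_⟩
  · simp only [mem_image]
    rintro _ ⟨p, hp, rfl⟩
    obtain ⟨ha, hb, heq⟩ := h.1 p hp
    have := h₁ p hp
    have := h₂ p hp
    refine ⟨by simp; omega, by simp; omega, ?_⟩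
    rw [List.getElem?_take_of_lt (by omega), List.getElem?_take_of_lt (by omega),
      List.getElem?_drop, List.getElem?_drop, Nat.add_sub_cancel' (h₁ p hp).1,
      Nat.add_sub_cancel' (h₂ p hp).1, heq]
  · simp only [mem_image]
    rintro _ ⟨p, hp, rfl⟩ _ ⟨q, hq, rfl⟩
    have := h.2 p hp q hq
    have := h₁ p hp
    have := h₁ q hq
    have := h₂ p hp
    have := h₂ q hq
    omega

lemma maxMatch_le_of_le_fbar {α : ℝ} (h : α ≤ fbar a b) :
    (maxMatch a b : ℝ) ≤ (1 - α) / 2 * (a.length + b.length) := by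
  rcases Nat.eq_zero_or_pos (a.length + b.length) with hab | hab
  · have := maxMatch_le_length_left a b
    have hzero : maxMatch a b = 0 := by omega
    simp [hzero, show (a.length : ℝ) + b.length = 0 by exact_mod_cast hab]
  · have hpos : (0 : ℝ) < a.length + b.length := by exact_mod_cast hab
    unfold fbar at h
    rw [le_sub_comm, div_le_iff₀ hpos] at h
    linarith

lemma maxMatch_le_of_separated {α ℓ : ℝ} (hα0 : 0 ≤ α) (hα1 : α ≤ 1) (hℓ : 0 ≤ ℓ)
    (hsep : ℓ ≤ a.length → ℓ ≤ b.length → α ≤ fbar a b) :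
    (maxMatch a b : ℝ) ≤ (1 - α) / 2 * (a.length + b.length) + α * ℓ := by
  by_cases hlong : ℓ ≤ a.length ∧ ℓ ≤ b.length
  · have := maxMatch_le_of_le_fbar (hsep hlong.1 hlong.2)
    linarith [mul_nonneg hα0 hℓ]
  · have ha : (maxMatch a b : ℝ) ≤ a.length := by exact_mod_cast maxMatch_le_length_left a b
    have hb : (maxMatch a b : ℝ) ≤ b.length := by exact_mod_cast maxMatch_le_length_right a b
    have hshort : (maxMatch a b : ℝ) ≤ ℓ := by
      rw [not_and_or, not_le, not_le] at hlong
      rcases hlong with h | h <;> linarith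
    have hsum : (0 : ℝ) ≤ a.length + b.length - 2 * maxMatch a b := by linarith
    linarith [mul_nonneg (sub_nonneg.2 hα1) hsum, mul_nonneg hα0 (sub_nonneg.2 hshort)]

end Match

section IntervalHull

variable {α : Type*} [LinearOrder α] [LocallyFiniteOrder α] {s t : Finset α}

def intervalHull (s : Finset α) : Finset α :=
  if h : s.Nonempty then Icc (s.min' h) (s.max' h) else ∅

lemma subset_intervalHull (s : Finset α) : s ⊆ intervalHull s := by
  intro x hx
  rw [intervalHull, dif_pos ⟨x, hx⟩]
  exact mem_Icc.2 ⟨s.min'_le x hx, s.le_max' x hx⟩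

lemma intervalHull_subset_Ico {lo hi : α} (h : s ⊆ Ico lo hi) :
    intervalHull s ⊆ Ico lo hi := by
  unfold intervalHull
  split_ifs with hs
  · intro x hx
    have hmin := mem_Ico.1 (h (s.min'_mem hs))
    have hmax := mem_Ico.1 (h (s.max'_mem hs))
    exact mem_Ico.2 ⟨hmin.1.trans (mem_Icc.1 hx).1, (mem_Icc.1 hx).2.trans_lt hmax.2⟩
  · exact empty_subset _

lemma disjoint_intervalHull (h : ∀ x ∈ s, ∀ y ∈ t, x < y) :
    Disjoint (intervalHull s) (intervalHull t) := by
  unfold intervalHull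
  split_ifs with hs ht
  · refine disjoint_left.2 fun z hzs hzt => ?_
    have := h _ (s.max'_mem hs) _ (t.min'_mem ht)
    exact absurd ((mem_Icc.1 hzs).2.trans_lt this) (not_lt.2 (mem_Icc.1 hzt).1)
  all_goals simp

lemma exists_intervalHull_eq_Ico (s : Finset ℕ) :
    ∃ lo, intervalHull s = Ico lo (lo + #(intervalHull s)) := by
  unfold intervalHull
  split_ifs with hs
  · refine ⟨s.min' hs, ?_⟩
    rw [Nat.card_Icc, ← Ico_add_one_right_eq_Icc]
    congr 1
    have := s.min'_le_max' hs
    omega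
  · exact ⟨0, rfl⟩

end IntervalHull

lemma sum_card_le_card_of_pairwiseDisjoint {ι β : Type*} [DecidableEq β] {F : Finset ι}
    {t : ι → Finset β} {U : Finset β} (hd : (F : Set ι).PairwiseDisjoint t)
    (hU : ∀ i ∈ F, t i ⊆ U) : ∑ i ∈ F, #(t i) ≤ #U := by
  rw [← card_biUnion hd]
  exact card_le_card (biUnion_subset.2 hU)

section Staircase

def IsStaircase (W : Finset (ℕ × ℕ)) : Prop :=
  ∀ c ∈ W, ∀ d ∈ W, c.1 < d.1 → c.2 ≤ d.2

/-- The order condition of `IsMatch`: a chain for the order "smaller in both coordinates". -/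
def IsStrictChain (C : Finset (ℕ × ℕ)) : Prop :=
  ∀ c ∈ C, ∀ d ∈ C, (c.1 < d.1 ↔ c.2 < d.2)

def maximalCells (W : Finset (ℕ × ℕ)) : Finset (ℕ × ℕ) :=
  {d ∈ W | ∀ e ∈ W, ¬(d.1 < e.1 ∧ d.2 < e.2)}

variable {W V C : Finset (ℕ × ℕ)}

lemma IsStaircase.mono (hW : IsStaircase W) (hV : V ⊆ W) : IsStaircase V :=
  fun c hc d hd => hW c (hV hc) d (hV hd)

lemma IsStaircase.card_le (hW : IsStaircase W) {n m : ℕ} (h : W ⊆ range n ×ˢ range m) :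
    #W ≤ n + m - 1 := by
  have hinj : Set.InjOn (fun c : ℕ × ℕ => c.1 + c.2) (W : Set (ℕ × ℕ)) := by
    intro c hc d hd he
    simp only at he
    rcases lt_trichotomy c.1 d.1 with hlt | heq | hgt
    · have := hW c hc d hd hlt; omega
    · exact Prod.ext heq (by omega)
    · have := hW d hd c hc hgt; omega
  have hmaps : Set.MapsTo (fun c : ℕ × ℕ => c.1 + c.2) W (range (n + m - 1)) := by
    intro c hc
    have := mem_product.1 (h hc)
    simp only [coe_range, Set.mem_Iio, mem_range] at this ⊢
    omega
  simpa using card_le_card_of_injOn _ hmaps hinj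

lemma IsStrictChain.insert (hC : IsStrictChain C) {d : ℕ × ℕ}
    (hd : ∀ c ∈ C, c.1 < d.1 ∧ c.2 < d.2) : IsStrictChain (insert d C) := by
  intro c hc e he
  rw [mem_insert] at hc he
  rcases hc with rfl | hcC <;> rcases he with rfl | heC
  · simp
  · have := hd e heC; omega
  · have := hd c hcC; omega
  · exact hC c hcC e heC

lemma exists_mem_maximalCells_ge {e : ℕ × ℕ} (he : e ∈ W) :
    ∃ d ∈ maximalCells W, e ≤ d := by
  obtain ⟨d, hd, hdmax⟩ :=
    exists_max_image {d ∈ W | e ≤ d} (fun d => d.1 + d.2) ⟨e, mem_filter.2 ⟨he, le_rfl⟩⟩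
  obtain ⟨hdW, hed⟩ := mem_filter.1 hd
  refine ⟨d, mem_filter.2 ⟨hdW, fun f hf hdf => ?_⟩, hed⟩
  have hef : e ≤ f := hed.trans (Prod.le_def.2 ⟨hdf.1.le, hdf.2.le⟩)
  have := hdmax f (mem_filter.2 ⟨hf, hef⟩)
  omega

lemma forall_fst_eq_or_forall_snd_eq {α β : Type*} {T : Finset (α × β)} {t : α × β}
    (h : ∀ s ∈ T, ∀ u ∈ T, s.1 = u.1 ∨ s.2 = u.2) (ht : t ∈ T) :
    (∀ s ∈ T, s.1 = t.1) ∨ ∀ s ∈ T, s.2 = t.2 := by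
  refine or_iff_not_imp_left.2 fun hrow => ?_
  obtain ⟨u, hu, hut⟩ := not_forall₂.1 hrow
  have hcol := (h u hu t ht).resolve_left hut
  intro v hv
  by_cases hvt : v.1 = t.1
  · rw [(h v hv u hu).resolve_left (hvt ▸ Ne.symm hut), hcol]
  · exact (h v hv t ht).resolve_left hvt

/-- In a staircase, two maximal cells in different rows are in the same column, so all
maximal cells lie in one row or one column. -/
lemma IsStaircase.sum_maximalCells_le (hW : IsStaircase W) {w : ℕ × ℕ → ℕ} {L : ℕ}
    (hrow : ∀ i, ∑ c ∈ W with c.1 = i, w c ≤ L)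
    (hcol : ∀ j, ∑ c ∈ W with c.2 = j, w c ≤ L) :
    ∑ c ∈ maximalCells W, w c ≤ L := by
  have hsub : maximalCells W ⊆ W := filter_subset _ _
  have hline : ∀ s ∈ maximalCells W, ∀ u ∈ maximalCells W, s.1 = u.1 ∨ s.2 = u.2 := by
    intro s hs u hu
    obtain ⟨hsW, hsmax⟩ := mem_filter.1 hs
    obtain ⟨huW, humax⟩ := mem_filter.1 hu
    rcases lt_trichotomy s.1 u.1 with hlt | heq | hgt
    · have := hW s hsW u huW hlt; have := hsmax u huW; omega
    · exact Or.inl heq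
    · have := hW u huW s hsW hgt; have := humax s hsW; omega
  rcases (maximalCells W).eq_empty_or_nonempty with hempty | ⟨t, ht⟩
  · simp [hempty]
  rcases forall_fst_eq_or_forall_snd_eq hline ht with hi | hj
  · exact (sum_le_sum_of_subset fun c hc => mem_filter.2 ⟨hsub hc, hi c hc⟩).trans (hrow t.1)
  · exact (sum_le_sum_of_subset fun c hc => mem_filter.2 ⟨hsub hc, hj c hc⟩).trans (hcol t.2)

/-- Every strict chain avoiding the maximal cells extends by a maximal cell above its top. -/
lemma card_le_of_isStrictChain_sdiff_maximalCells {k : ℕ}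
    (hchain : ∀ C ⊆ W, IsStrictChain C → #C ≤ k + 1) :
    ∀ C ⊆ W \ maximalCells W, IsStrictChain C → #C ≤ k := by
  intro C hC hCc
  rcases C.eq_empty_or_nonempty with rfl | hne
  · simp
  obtain ⟨c₀, hc₀, htop⟩ := exists_max_image C Prod.fst hne
  obtain ⟨hc₀W, hc₀max⟩ := mem_sdiff.1 (hC hc₀)
  obtain ⟨e, heW, hc₀e⟩ : ∃ e ∈ W, c₀.1 < e.1 ∧ c₀.2 < e.2 := by
    simpa [maximalCells, hc₀W] using hc₀max
  obtain ⟨d, hd, hed⟩ := exists_mem_maximalCells_ge heW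
  have hbelow : ∀ c ∈ C, c.1 < d.1 ∧ c.2 < d.2 := by
    intro c hc
    have := htop c hc
    have := hCc c hc c₀ hc₀
    have := hCc c₀ hc₀ c hc
    have := Prod.le_def.1 hed
    omega
  have hdC : d ∉ C := fun h => (mem_sdiff.1 (hC h)).2 hd
  have := hchain (insert d C) (insert_subset (filter_subset _ _ hd) (hC.trans sdiff_subset))
    (hCc.insert hbelow)
  rw [card_insert_of_notMem hdC] at this
  omega

/-- Peel off the maximal cells, which lie in a single row or column, `k` times. -/
theorem IsStaircase.sum_le_mul (hW : IsStaircase W) {w : ℕ × ℕ → ℕ} {k L : ℕ}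
    (hchain : ∀ C ⊆ W, IsStrictChain C → #C ≤ k)
    (hrow : ∀ i, ∑ c ∈ W with c.1 = i, w c ≤ L)
    (hcol : ∀ j, ∑ c ∈ W with c.2 = j, w c ≤ L) :
    ∑ c ∈ W, w c ≤ k * L := by
  induction k generalizing W with
  | zero =>
    have : W = ∅ := eq_empty_of_forall_notMem fun c hc => by
      simpa using hchain {c} (singleton_subset_iff.2 hc) (by simp [IsStrictChain])
    simp [this]
  | succ k ih =>
    have hrest := ih (hW.mono sdiff_subset)
      (card_le_of_isStrictChain_sdiff_maximalCells hchain)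
      (fun i => (sum_le_sum_of_subset
        (filter_subset_filter (fun c : ℕ × ℕ => c.1 = i) sdiff_subset)).trans (hrow i))
      (fun j => (sum_le_sum_of_subset
        (filter_subset_filter (fun c : ℕ × ℕ => c.2 = j) sdiff_subset)).trans (hcol j))
    have htop := hW.sum_maximalCells_le hrow hcol
    have hsplit :
        ∑ c ∈ W \ maximalCells W, w c + ∑ c ∈ maximalCells W, w c = ∑ c ∈ W, w c :=
      sum_sdiff (filter_subset _ _)
    rw [Nat.succ_mul]
    omega

end Staircase

section Blocks

variable {S I : Type*} {A : I → List S} {L : ℕ}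

lemma length_flatten_map_of_length_eq (hA : ∀ s, (A s).length = L) (a : List I) :
    (a.map A).flatten.length = a.length * L := by
  simp [List.length_flatten, Function.comp_def, hA]

lemma getElem?_flatten_map_of_length_eq (hL : 0 < L) (hA : ∀ s, (A s).length = L)
    (a : List I) (p : ℕ) :
    (a.map A).flatten[p]? = a[p / L]?.bind fun s => (A s)[p % L]? := by
  induction a generalizing p with
  | nil => simp
  | cons s t ih =>
    simp only [List.map_cons, List.flatten_cons]
    by_cases hp : p < L
    · rw [List.getElem?_append_left (by rw [hA s]; exact hp), Nat.div_eq_of_lt hp,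
        Nat.mod_eq_of_lt hp]
      simp
    · rw [not_lt] at hp
      rw [List.getElem?_append_right (by rw [hA s]; exact hp), hA s, ih (p - L),
        Nat.div_eq_sub_div hL hp, Nat.mod_eq_sub_mod hp]
      simp

lemma drop_take_flatten_map_eq (hL : 0 < L) (hA : ∀ s, (A s).length = L) {a : List I}
    {i : ℕ} {s : I} (hs : a[i]? = some s) {j x : ℕ} (hj : i * L ≤ j)
    (hjx : j + x ≤ i * L + L) :
    ((a.map A).flatten.drop j).take x = ((A s).drop (j - i * L)).take x := by
  refine List.ext_getElem? fun r => ?_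
  simp only [List.getElem?_take, List.getElem?_drop]
  split_ifs with hr
  · have hdiv : (j + r) / L = i := Nat.div_eq_of_lt_le (by omega) (by rw [Nat.succ_mul]; omega)
    have hmod := Nat.div_add_mod (j + r) L
    rw [hdiv, mul_comm] at hmod
    rw [getElem?_flatten_map_of_length_eq hL hA, hdiv, hs, Option.bind_some]
    congr 1
    omega
  · rfl

lemma infix_drop_take_flatten_map (hL : 0 < L) (hA : ∀ s, (A s).length = L) {a : List I}
    {i : ℕ} {s : I} (hs : a[i]? = some s) {j x : ℕ}
    (hwin : Ico j (j + x) ⊆ Ico (i * L) (i * L + L)) :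
    ((a.map A).flatten.drop j).take x <:+: A s ∧
      (((a.map A).flatten.drop j).take x).length = x := by
  rcases Nat.eq_zero_or_pos x with rfl | hx
  · simp
  obtain ⟨hj, hjx⟩ := (Ico_subset_Ico_iff (by omega)).1 hwin
  rw [drop_take_flatten_map_eq hL hA hs hj hjx]
  refine ⟨(List.take_prefix _ _).isInfix.trans (List.drop_suffix _ _).isInfix, ?_⟩
  simp only [List.length_take, List.length_drop, hA]
  omega

end Blocks

section Cells

variable {γ δ : Type*} {X Y : List γ} {M : Finset (ℕ × ℕ)} {L : ℕ} {p q c : ℕ × ℕ}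

def cellOf (L : ℕ) (p : ℕ × ℕ) : ℕ × ℕ := (p.1 / L, p.2 / L)

def cellPart (L : ℕ) (M : Finset (ℕ × ℕ)) (c : ℕ × ℕ) : Finset (ℕ × ℕ) :=
  {p ∈ M | cellOf L p = c}

def fstSpan (L : ℕ) (M : Finset (ℕ × ℕ)) (c : ℕ × ℕ) : Finset ℕ :=
  intervalHull ((cellPart L M c).image Prod.fst)

def sndSpan (L : ℕ) (M : Finset (ℕ × ℕ)) (c : ℕ × ℕ) : Finset ℕ :=
  intervalHull ((cellPart L M c).image Prod.snd)

lemma mem_cellPart : p ∈ cellPart L M c ↔ p ∈ M ∧ p.1 / L = c.1 ∧ p.2 / L = c.2 := by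
  simp [cellPart, cellOf, Prod.ext_iff]

lemma IsMatch.isStaircase_image_cellOf (hM : IsMatch X Y M) :
    IsStaircase (M.image (cellOf L)) := by
  simp only [IsStaircase, mem_image]
  rintro _ ⟨p, hp, rfl⟩ _ ⟨q, hq, rfl⟩ hlt
  exact Nat.div_le_div_right ((hM.2 p hp q hq).1 (Nat.lt_of_div_lt_div hlt)).le

lemma IsMatch.fst_lt_of_toLex_lt (hM : IsMatch X Y M) (hp : p ∈ M) (hq : q ∈ M)
    (h : toLex (cellOf L p) < toLex (cellOf L q)) : p.1 < q.1 := by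
  rcases Prod.Lex.toLex_lt_toLex.1 h with h | ⟨-, h⟩
  · exact Nat.lt_of_div_lt_div h
  · exact (hM.2 p hp q hq).2 (Nat.lt_of_div_lt_div h)

lemma IsMatch.snd_lt_of_toLex_swap_lt (hM : IsMatch X Y M) (hp : p ∈ M) (hq : q ∈ M)
    (h : toLex (cellOf L p).swap < toLex (cellOf L q).swap) : p.2 < q.2 := by
  rcases Prod.Lex.toLex_lt_toLex.1 h with h | ⟨-, h⟩
  · exact Nat.lt_of_div_lt_div h
  · exact (hM.2 p hp q hq).1 (Nat.lt_of_div_lt_div h)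

/-- Cells ordered lexicographically (row first) have their first positions ordered. -/
lemma IsMatch.pairwise_disjoint_fstSpan (hM : IsMatch X Y M) :
    Pairwise (Disjoint on (fstSpan L M)) := by
  have key : ∀ c d, toLex c < toLex d → Disjoint (fstSpan L M c) (fstSpan L M d) := by
    intro c d h
    apply disjoint_intervalHull
    simp only [mem_image, cellPart, mem_filter]
    rintro _ ⟨p, ⟨hp, rfl⟩, rfl⟩ _ ⟨q, ⟨hq, rfl⟩, rfl⟩
    exact hM.fst_lt_of_toLex_lt hp hq h
  intro c d hcd
  rcases lt_or_gt_of_ne (toLex.injective.ne hcd) with h | h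
  · exact key c d h
  · exact (key d c h).symm

lemma IsMatch.pairwise_disjoint_sndSpan (hM : IsMatch X Y M) :
    Pairwise (Disjoint on (sndSpan L M)) := by
  have key : ∀ c d : ℕ × ℕ, toLex c.swap < toLex d.swap →
      Disjoint (sndSpan L M c) (sndSpan L M d) := by
    intro c d h
    apply disjoint_intervalHull
    simp only [mem_image, cellPart, mem_filter]
    rintro _ ⟨p, ⟨hp, rfl⟩, rfl⟩ _ ⟨q, ⟨hq, rfl⟩, rfl⟩
    exact hM.snd_lt_of_toLex_swap_lt hp hq h
  intro c d hcd
  rcases lt_or_gt_of_ne (toLex.injective.ne (Prod.swap_injective.ne hcd)) with h | h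
  · exact key c d h
  · exact (key d c h).symm

lemma IsMatch.card_cellPart_le_card_fstSpan (hM : IsMatch X Y M) :
    #(cellPart L M c) ≤ #(fstSpan L M c) :=
  (card_image_of_injOn (hM.fst_injOn.mono (coe_subset.2 (filter_subset _ _)))).ge.trans
    (card_le_card (subset_intervalHull _))

lemma IsMatch.card_cellPart_le_card_sndSpan (hM : IsMatch X Y M) :
    #(cellPart L M c) ≤ #(sndSpan L M c) :=
  (card_image_of_injOn (hM.snd_injOn.mono (coe_subset.2 (filter_subset _ _)))).ge.trans
    (card_le_card (subset_intervalHull _))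

lemma fstSpan_subset_Ico (hL : 0 < L) : fstSpan L M c ⊆ Ico (c.1 * L) (c.1 * L + L) := by
  refine intervalHull_subset_Ico fun x hx => ?_
  obtain ⟨p, hp, rfl⟩ := mem_image.1 hx
  have := (Nat.div_eq_iff hL).1 (mem_cellPart.1 hp).2.1
  exact mem_Ico.2 ⟨this.1, by omega⟩

lemma sndSpan_subset_Ico (hL : 0 < L) : sndSpan L M c ⊆ Ico (c.2 * L) (c.2 * L + L) := by
  refine intervalHull_subset_Ico fun x hx => ?_
  obtain ⟨p, hp, rfl⟩ := mem_image.1 hx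
  have := (Nat.div_eq_iff hL).1 (mem_cellPart.1 hp).2.2
  exact mem_Ico.2 ⟨this.1, by omega⟩

lemma IsMatch.sum_card_fstSpan_le (hM : IsMatch X Y M) (F : Finset (ℕ × ℕ)) :
    ∑ c ∈ F, #(fstSpan L M c) ≤ X.length := by
  have hsub : ∀ c ∈ F, fstSpan L M c ⊆ Ico 0 X.length := fun c _ =>
    intervalHull_subset_Ico fun x hx => by
      obtain ⟨p, hp, rfl⟩ := mem_image.1 hx
      exact mem_Ico.2 ⟨Nat.zero_le _, (hM.1 p (mem_cellPart.1 hp).1).1⟩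
  simpa using
    sum_card_le_card_of_pairwiseDisjoint (hM.pairwise_disjoint_fstSpan.set_pairwise F) hsub

lemma IsMatch.sum_card_sndSpan_le (hM : IsMatch X Y M) (F : Finset (ℕ × ℕ)) :
    ∑ c ∈ F, #(sndSpan L M c) ≤ Y.length := by
  have hsub : ∀ c ∈ F, sndSpan L M c ⊆ Ico 0 Y.length := fun c _ =>
    intervalHull_subset_Ico fun x hx => by
      obtain ⟨p, hp, rfl⟩ := mem_image.1 hx
      exact mem_Ico.2 ⟨Nat.zero_le _, (hM.1 p (mem_cellPart.1 hp).1).2.1⟩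
  simpa using
    sum_card_le_card_of_pairwiseDisjoint (hM.pairwise_disjoint_sndSpan.set_pairwise F) hsub

lemma IsMatch.sum_card_cellPart_row_le (hL : 0 < L) (hM : IsMatch X Y M) (F : Finset (ℕ × ℕ))
    (i : ℕ) : ∑ c ∈ F with c.1 = i, #(cellPart L M c) ≤ L :=
  calc ∑ c ∈ F with c.1 = i, #(cellPart L M c)
      ≤ ∑ c ∈ F with c.1 = i, #(fstSpan L M c) :=
        sum_le_sum fun _ _ => hM.card_cellPart_le_card_fstSpan
    _ ≤ #(Ico (i * L) (i * L + L)) :=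
        sum_card_le_card_of_pairwiseDisjoint (hM.pairwise_disjoint_fstSpan.set_pairwise _)
          fun c hc => (mem_filter.1 hc).2 ▸ fstSpan_subset_Ico hL
    _ = L := by simp

lemma IsMatch.sum_card_cellPart_col_le (hL : 0 < L) (hM : IsMatch X Y M) (F : Finset (ℕ × ℕ))
    (j : ℕ) : ∑ c ∈ F with c.2 = j, #(cellPart L M c) ≤ L :=
  calc ∑ c ∈ F with c.2 = j, #(cellPart L M c)
      ≤ ∑ c ∈ F with c.2 = j, #(sndSpan L M c) :=
        sum_le_sum fun _ _ => hM.card_cellPart_le_card_sndSpan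
    _ ≤ #(Ico (j * L) (j * L + L)) :=
        sum_card_le_card_of_pairwiseDisjoint (hM.pairwise_disjoint_sndSpan.set_pairwise _)
          fun c hc => (mem_filter.1 hc).2 ▸ sndSpan_subset_Ico hL
    _ = L := by simp

/-- A strict chain of cells that sit at matching positions of `a` and `b` is a match
between `a` and `b`. -/
lemma IsMatch.sum_card_cellPart_le_maxMatch_mul (hL : 0 < L) (hM : IsMatch X Y M)
    {a b : List δ} {F : Finset (ℕ × ℕ)} (hF : F ⊆ M.image (cellOf L))
    (hgood : ∀ c ∈ F, c.1 < a.length ∧ c.2 < b.length ∧ a[c.1]? = b[c.2]?) :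
    ∑ c ∈ F, #(cellPart L M c) ≤ maxMatch a b * L :=
  (hM.isStaircase_image_cellOf.mono hF).sum_le_mul
    (fun _ hC hCc => IsMatch.card_le_maxMatch ⟨fun c hc => hgood c (hC hc), hCc⟩)
    (hM.sum_card_cellPart_row_le hL F) (hM.sum_card_cellPart_col_le hL F)

end Cells

section BlockReplacement

variable {S I : Type*} {A : I → List S} {L : ℕ} {a b : List I} {M : Finset (ℕ × ℕ)}
  {α ℓ : ℝ}

lemma IsMatch.image_cellOf_subset (hA : ∀ s, (A s).length = L)
    (hM : IsMatch (a.map A).flatten (b.map A).flatten M) :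
    M.image (cellOf L) ⊆ range a.length ×ˢ range b.length := by
  simp only [subset_iff, mem_image, mem_product, mem_range]
  rintro _ ⟨p, hp, rfl⟩
  have hlen := hM.1 p hp
  rw [length_flatten_map_of_length_eq hA, length_flatten_map_of_length_eq hA] at hlen
  exact ⟨Nat.div_lt_of_lt_mul (mul_comm L _ ▸ hlen.1),
    Nat.div_lt_of_lt_mul (mul_comm L _ ▸ hlen.2.1)⟩

/-- The pairs of the cell lie in windows `C` of `A a_i` and `D` of `A b_j` of lengths
`#fstSpan` and `#sndSpan`. -/
lemma IsMatch.card_cellPart_le_of_separated (hL : 0 < L) (hA : ∀ s, (A s).length = L)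
    (hM : IsMatch (a.map A).flatten (b.map A).flatten M) {c : ℕ × ℕ}
    (hc : c ∈ M.image (cellOf L)) (hne : a[c.1]? ≠ b[c.2]?)
    (hα0 : 0 ≤ α) (hα1 : α ≤ 1) (hℓ : 0 ≤ ℓ)
    (hsep : ∀ s ∈ a, ∀ t ∈ b, s ≠ t → ∀ C D : List S, C <:+: A s → D <:+: A t →
      ℓ ≤ C.length → ℓ ≤ D.length → α ≤ fbar C D) :
    (#(cellPart L M c) : ℝ) ≤
      (1 - α) / 2 * (#(fstSpan L M c) + #(sndSpan L M c)) + α * ℓ := by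
  obtain ⟨hc₁, hc₂⟩ := mem_product.1 (hM.image_cellOf_subset hA hc)
  rw [mem_range] at hc₁ hc₂
  have hs := List.getElem?_eq_getElem hc₁
  have ht := List.getElem?_eq_getElem hc₂
  rw [hs, ht, Ne, Option.some_inj] at hne
  obtain ⟨i, hi⟩ := exists_intervalHull_eq_Ico ((cellPart L M c).image Prod.fst)
  obtain ⟨j, hj⟩ := exists_intervalHull_eq_Ico ((cellPart L M c).image Prod.snd)
  change fstSpan L M c = Ico i (i + #(fstSpan L M c)) at hi
  change sndSpan L M c = Ico j (j + #(sndSpan L M c)) at hj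
  obtain ⟨hCs, hClen⟩ := infix_drop_take_flatten_map hL hA hs (hi ▸ fstSpan_subset_Ico hL)
  obtain ⟨hDt, hDlen⟩ := infix_drop_take_flatten_map hL hA ht (hj ▸ sndSpan_subset_Ico hL)
  have hfst : ∀ p ∈ cellPart L M c, p.1 ∈ fstSpan L M c := fun p hp =>
    subset_intervalHull _ (mem_image_of_mem Prod.fst hp)
  have hsnd : ∀ p ∈ cellPart L M c, p.2 ∈ sndSpan L M c := fun p hp =>
    subset_intervalHull _ (mem_image_of_mem Prod.snd hp)
  have hcard := (hM.subset (filter_subset _ _ : cellPart L M c ⊆ M)).card_le_maxMatch_drop_take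
    (fun p hp => mem_Ico.1 (hi ▸ hfst p hp)) (fun p hp => mem_Ico.1 (hj ▸ hsnd p hp))
  have hCD := maxMatch_le_of_separated hα0 hα1 hℓ
    (hsep _ (List.getElem_mem hc₁) _ (List.getElem_mem hc₂) hne _ _ hCs hDt)
  rw [hClen, hDlen] at hCD
  exact (Nat.cast_le.2 hcard).trans hCD

lemma IsMatch.sum_card_cellPart_le_of_separated (hL : 0 < L) (hA : ∀ s, (A s).length = L)
    (hM : IsMatch (a.map A).flatten (b.map A).flatten M) {F : Finset (ℕ × ℕ)}
    (hF : ∀ c ∈ F, c ∈ M.image (cellOf L) ∧ a[c.1]? ≠ b[c.2]?)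
    (hα0 : 0 ≤ α) (hα1 : α ≤ 1) (hℓ : 0 ≤ ℓ)
    (hsep : ∀ s ∈ a, ∀ t ∈ b, s ≠ t → ∀ C D : List S, C <:+: A s → D <:+: A t →
      ℓ ≤ C.length → ℓ ≤ D.length → α ≤ fbar C D) :
    ((∑ c ∈ F, #(cellPart L M c) : ℕ) : ℝ) ≤
      (1 - α) / 2 * ((∑ c ∈ F, #(fstSpan L M c) : ℕ) + (∑ c ∈ F, #(sndSpan L M c) : ℕ)) +
        #F * (α * ℓ) := by
  push_cast
  calc ∑ c ∈ F, (#(cellPart L M c) : ℝ)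
      ≤ ∑ c ∈ F, ((1 - α) / 2 * (#(fstSpan L M c) + #(sndSpan L M c)) + α * ℓ) :=
        sum_le_sum fun c hc => hM.card_cellPart_le_of_separated hL hA
          (hF c hc).1 (hF c hc).2 hα0 hα1 hℓ hsep
    _ = _ := by rw [sum_add_distrib, ← mul_sum, sum_add_distrib, sum_const, nsmul_eq_mul]

lemma IsMatch.sum_card_cellPart_add_sum_card_fstSpan_le {γ : Type*} {X Y : List γ}
    (hM : IsMatch X Y M) (W : Finset (ℕ × ℕ)) (P : ℕ × ℕ → Prop) [DecidablePred P] :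
    ∑ c ∈ W with P c, #(cellPart L M c) + ∑ c ∈ W with ¬P c, #(fstSpan L M c) ≤
      X.length :=
  calc ∑ c ∈ W with P c, #(cellPart L M c) + ∑ c ∈ W with ¬P c, #(fstSpan L M c)
      ≤ ∑ c ∈ W with P c, #(fstSpan L M c) + ∑ c ∈ W with ¬P c, #(fstSpan L M c) :=
        Nat.add_le_add_right (sum_le_sum fun _ _ => hM.card_cellPart_le_card_fstSpan) _
    _ = ∑ c ∈ W, #(fstSpan L M c) := sum_filter_add_sum_filter_not _ _ _
    _ ≤ X.length := hM.sum_card_fstSpan_le W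

lemma IsMatch.sum_card_cellPart_add_sum_card_sndSpan_le {γ : Type*} {X Y : List γ}
    (hM : IsMatch X Y M) (W : Finset (ℕ × ℕ)) (P : ℕ × ℕ → Prop) [DecidablePred P] :
    ∑ c ∈ W with P c, #(cellPart L M c) + ∑ c ∈ W with ¬P c, #(sndSpan L M c) ≤
      Y.length :=
  calc ∑ c ∈ W with P c, #(cellPart L M c) + ∑ c ∈ W with ¬P c, #(sndSpan L M c)
      ≤ ∑ c ∈ W with P c, #(sndSpan L M c) + ∑ c ∈ W with ¬P c, #(sndSpan L M c) :=
        Nat.add_le_add_right (sum_le_sum fun _ _ => hM.card_cellPart_le_card_sndSpan) _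
    _ = ∑ c ∈ W, #(sndSpan L M c) := sum_filter_add_sum_filter_not _ _ _
    _ ≤ Y.length := hM.sum_card_sndSpan_le W

theorem maxMatch_flatten_map_le (hL : 0 < L) (hA : ∀ s, (A s).length = L) (hα0 : 0 ≤ α)
    (hα1 : α ≤ 1) (hℓ : 0 ≤ ℓ)
    (hsep : ∀ s ∈ a, ∀ t ∈ b, s ≠ t → ∀ C D : List S, C <:+: A s → D <:+: A t →
      ℓ ≤ C.length → ℓ ≤ D.length → α ≤ fbar C D) :
    (maxMatch (a.map A).flatten (b.map A).flatten : ℝ) ≤ α * (maxMatch a b * L) +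
      (1 - α) / 2 * ((a.length + b.length) * L) + α * ℓ * (a.length + b.length - 1 : ℕ) := by
  classical
  obtain ⟨M, hM, hMcard⟩ := exists_isMatch_card_eq_maxMatch (a.map A).flatten (b.map A).flatten
  have hWgrid := hM.image_cellOf_subset hA
  set W := M.image (cellOf L)
  set good : ℕ × ℕ → Prop := fun c => a[c.1]? = b[c.2]?
  set Sg := ∑ c ∈ W with good c, #(cellPart L M c)
  set Sb := ∑ c ∈ W with ¬good c, #(cellPart L M c)
  set Xb := ∑ c ∈ W with ¬good c, #(fstSpan L M c)
  set Yb := ∑ c ∈ W with ¬good c, #(sndSpan L M c)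
  set B := #{c ∈ W | ¬good c}
  have hG : Sg ≤ maxMatch a b * L :=
    hM.sum_card_cellPart_le_maxMatch_mul hL (filter_subset _ _) fun c hc =>
      have hcW := mem_product.1 (hWgrid (mem_filter.1 hc).1)
      ⟨mem_range.1 hcW.1, mem_range.1 hcW.2, (mem_filter.1 hc).2⟩
  have hX : Sg + Xb ≤ a.length * L := length_flatten_map_of_length_eq hA a ▸
    hM.sum_card_cellPart_add_sum_card_fstSpan_le W good
  have hY : Sg + Yb ≤ b.length * L := length_flatten_map_of_length_eq hA b ▸
    hM.sum_card_cellPart_add_sum_card_sndSpan_le W good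
  have hBcard : B ≤ a.length + b.length - 1 :=
    (card_le_card (filter_subset _ _)).trans (hM.isStaircase_image_cellOf.card_le hWgrid)
  have hSb : (Sb : ℝ) ≤ (1 - α) / 2 * (Xb + Yb) + B * (α * ℓ) :=
    hM.sum_card_cellPart_le_of_separated hL hA (fun c hc => mem_filter.1 hc) hα0 hα1 hℓ hsep
  have hGα : α * Sg ≤ α * (maxMatch a b * L) :=
    mul_le_mul_of_nonneg_left (by exact_mod_cast hG) hα0
  have hBα : (B : ℝ) * (α * ℓ) ≤ (a.length + b.length - 1 : ℕ) * (α * ℓ) :=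
    mul_le_mul_of_nonneg_right (by exact_mod_cast hBcard) (mul_nonneg hα0 hℓ)
  have hXY : (1 - α) / 2 * (Xb + Yb) ≤ (1 - α) / 2 * ((a.length + b.length) * L - 2 * Sg) := by
    refine mul_le_mul_of_nonneg_left ?_ (by linarith)
    have hX' : ((Sg + Xb : ℕ) : ℝ) ≤ (a.length * L : ℕ) := Nat.cast_le.2 hX
    have hY' : ((Sg + Yb : ℕ) : ℝ) ≤ (b.length * L : ℕ) := Nat.cast_le.2 hY
    push_cast at hX' hY'
    linarith
  have hsplit : #M = Sg + Sb :=
    (card_eq_sum_card_image _ M).trans (sum_filter_add_sum_filter_not _ _ _).symm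
  rw [← hMcard, hsplit, Nat.cast_add]
  linarith

end BlockReplacement

lemma fbar_flatten_map {S I : Type*} {A : I → List S} {L : ℕ} (hA : ∀ s, (A s).length = L)
    (a b : List I) :
    fbar (a.map A).flatten (b.map A).flatten =
      1 - 2 * maxMatch (a.map A).flatten (b.map A).flatten / ((a.length + b.length) * L) := by
  rw [fbar, length_flatten_map_of_length_eq hA, length_flatten_map_of_length_eq hA]
  push_cast
  ring

theorem fbar_symbol_by_block_replacement_general {S I : Type*} (L : ℕ) (hL : 0 < L)
    (A : I → List S) (hA : ∀ i, (A i).length = L)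
    (a b : List I) (ha : a ≠ [])
    (α : ℝ) (hα0 : 0 < α) (hα7 : α < 1 / 7) (R : ℝ) (hR : 2 ≤ R)
    (hsep : ∀ s ∈ a, ∀ t ∈ b, s ≠ t → ∀ C D : List S, C <:+: A s → D <:+: A t →
      (L : ℝ) / R ≤ (C.length : ℝ) → (L : ℝ) / R ≤ (D.length : ℝ) → α ≤ fbar C D) :
    fbar (a.map A).flatten (b.map A).flatten > α * fbar a b - 1 / R := by
  have hn := List.length_pos_of_ne_nil ha
  have hLR : (0 : ℝ) < L / R := by positivity
  have hK := maxMatch_flatten_map_le hL hA hα0.le (by linarith) hLR.le hsep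
  rw [Nat.cast_sub (by omega), Nat.cast_add, Nat.cast_one] at hK
  set q : ℝ := a.length + b.length
  have hq : 1 ≤ q := by simp only [q]; norm_cast; omega
  have hqL : 0 < q * L := by positivity
  have herr : α * (L / R) * (q - 1) < q * L / R / 2 :=
    calc α * (L / R) * (q - 1) = α * (q - 1) * (L / R) := by ring
      _ < q / 2 * (L / R) := mul_lt_mul_of_pos_right (by nlinarith) hLR
      _ = q * L / R / 2 := by ring
  have hKq : 2 * maxMatch (a.map A).flatten (b.map A).flatten / (q * L) <
      2 * α * maxMatch a b / q + (1 - α) + 1 / R := by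
    rw [div_lt_iff₀ hqL]
    have : (2 * α * maxMatch a b / q + (1 - α) + 1 / R) * (q * L) =
        2 * (α * (maxMatch a b * L)) + 2 * ((1 - α) / 2 * (q * L)) + 2 * (q * L / R / 2) := by
      field_simp
    linarith
  rw [fbar_flatten_map hA, fbar, gt_iff_lt]
  have : α * (1 - 2 * maxMatch a b / q) = α - 2 * α * maxMatch a b / q := by ring
  linarith

/-- Symbol by block replacement: replacing symbols by blocks of equal length `L` whose
substantial substrings are `α`-separated in `f̄` yields
`f̄(A_{a₁}⋯A_{aₙ}, A_{b₁}⋯A_{b_m}) > α·f̄(a,b) − 1/R`. -/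
theorem fbar_symbol_by_block_replacement {S I : Type*} (L : ℕ) (hL : 0 < L)
    (A : I → List S) (hA : ∀ i, (A i).length = L)
    (a b : List I) (ha : a ≠ []) (hb : b ≠ [])
    (α : ℝ) (hα0 : 0 < α) (hα7 : α < 1 / 7) (R : ℝ) (hR : 2 ≤ R)
    (hsep : ∀ s ∈ a, ∀ t ∈ b, s ≠ t → ∀ C D : List S, C <:+: A s → D <:+: A t →
      (L : ℝ) / R ≤ (C.length : ℝ) → (L : ℝ) / R ≤ (D.length : ℝ) → α ≤ fbar C D) :
    fbar (a.map A).flatten (b.map A).flatten > α * fbar a b - 1 / R :=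
  fbar_symbol_by_block_replacement_general L hL A hA a b ha α hα0 hα7 R hR hsep
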